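/- Let C be a category with pullbacks. For any f : X ⟶ Y and g : Z ⟶ Y in C, let W = X ×_Y Z be a pullback with projections pr₁ : W ⟶ X and pr₂ : W ⟶ Z. Then the square in the category of presheaves of sets on C with top arrow ṽ(pr₂, g) : Yo(W) ⟶ Ũ_C, left arrow Yo(pr₁) : Yo(W) ⟶ Yo(X), right arrow p_C : Ũ_C ⟶ U_C and bottom arrow v(f, g) : Yo(X) ⟶ U_C is a pullback square. In particular, the pullback of p_C along any morphism from a representable presheaf to U_C is representable. -/

import Mathlib

open CategoryTheory Limits Opposite

universe u

variable (C : Type u) [SmallCategory C]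

/-- The presheaf `U_C` with `U_C(X) = {(f, g) : f : X ⟶ Y, g : Z ⟶ Y}`,
encoded as `⟨Y, Z, f, g⟩`, with restriction `(f, g) ↦ (a ≫ f, g)`. -/
def UPsh : Cᵒᵖ ⥤ Type u where
  obj X := Σ (Y : C) (Z : C), (unop X ⟶ Y) × (Z ⟶ Y)
  map a := TypeCat.ofHom fun s => ⟨s.1, s.2.1, a.unop ≫ s.2.2.1, s.2.2.2⟩
  map_id := by intro X; refine ConcreteCategory.hom_ext _ _ fun s => ?_; simp
  map_comp := by intro X Y Z a b; refine ConcreteCategory.hom_ext _ _ fun s => ?_; simp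

/-- The presheaf `Ũ_C` with `Ũ_C(X) = {(f', g) : f' : X ⟶ Z, g : Z ⟶ Y}`,
encoded as `⟨Z, Y, f', g⟩`, with restriction `(f', g) ↦ (a ≫ f', g)`. -/
def UtildePsh : Cᵒᵖ ⥤ Type u where
  obj X := Σ (Z : C) (Y : C), (unop X ⟶ Z) × (Z ⟶ Y)
  map a := TypeCat.ofHom fun s => ⟨s.1, s.2.1, a.unop ≫ s.2.2.1, s.2.2.2⟩
  map_id := by intro X; refine ConcreteCategory.hom_ext _ _ fun s => ?_; simp
  map_comp := by intro X Y Z a b; refine ConcreteCategory.hom_ext _ _ fun s => ?_; simp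

/-- The morphism of presheaves `p_C : Ũ_C ⟶ U_C`, `(f', g) ↦ (f' ≫ g, g)`. -/
def pPsh : UtildePsh C ⟶ UPsh C where
  app X := TypeCat.ofHom fun s => ⟨s.2.1, s.1, s.2.2.1 ≫ s.2.2.2, s.2.2.2⟩
  naturality := by intro X Y a; refine ConcreteCategory.hom_ext _ _ fun s => ?_; exact Sigma.ext rfl (heq_of_eq (Sigma.ext rfl (heq_of_eq (Prod.ext (Category.assoc _ _ _) rfl))))

/-!
A section of `Ũ_C` over `U` that `p_C` sends to `(k ≫ f, g)`, the restriction of `(f, g)` along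
`k : U ⟶ X`, is a map `b : U ⟶ Z` with `b ≫ g = k ≫ f`. So, objectwise, the square is the
universal property of the pullback `W`, and a square of presheaves is a pullback as soon as it is
one objectwise.
-/

variable {C}

lemma uTildePsh_mk_inj {U : Cᵒᵖ} {Z Y : C} {b b' : unop U ⟶ Z} {g g' : Z ⟶ Y} :
    (⟨Z, Y, b, g⟩ : (UtildePsh C).obj U) = ⟨Z, Y, b', g'⟩ ↔ b = b' ∧ g = g' := by
  simp

lemma pPsh_app_eq_mk_iff {U : Cᵒᵖ} (s : (UtildePsh C).obj U) {Y Z : C} (a : unop U ⟶ Y)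
    (g : Z ⟶ Y) :
    (pPsh C).app U s = ⟨Y, Z, a, g⟩ ↔ ∃ b : unop U ⟶ Z, s = ⟨Z, Y, b, g⟩ ∧ b ≫ g = a := by
  constructor
  · obtain ⟨Z', Y', b, g'⟩ := s
    intro h
    change (⟨Y', Z', b ≫ g', g'⟩ : (UPsh C).obj U) = ⟨Y, Z, a, g⟩ at h
    cases h
    exact ⟨b, rfl, rfl⟩
  · rintro ⟨b, rfl, rfl⟩
    rfl

lemma yonedaEquiv_symm_uTildePsh_app {W Z Y : C} (a : W ⟶ Z) (g : Z ⟶ Y) {U : Cᵒᵖ}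
    (k : unop U ⟶ W) :
    ((yonedaEquiv (F := UtildePsh C)).symm ⟨Z, Y, a, g⟩).app U k =
      (⟨Z, Y, k ≫ a, g⟩ : (UtildePsh C).obj U) :=
  rfl

lemma yonedaEquiv_symm_uPsh_app {X Y Z : C} (a : X ⟶ Y) (g : Z ⟶ Y) {U : Cᵒᵖ}
    (k : unop U ⟶ X) :
    ((yonedaEquiv (F := UPsh C)).symm ⟨Y, Z, a, g⟩).app U k =
      (⟨Y, Z, k ≫ a, g⟩ : (UPsh C).obj U) :=
  rfl

theorem uPsh_pullback_representable_general {C : Type u} [SmallCategory C]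
    {X Y Z W : C} (f : X ⟶ Y) (g : Z ⟶ Y) (pr₁ : W ⟶ X) (pr₂ : W ⟶ Z)
    (h : IsPullback pr₁ pr₂ f g) :
    IsPullback (yonedaEquiv.symm (⟨Z, Y, pr₂, g⟩ : (UtildePsh C).obj (op W)))
      (yoneda.map pr₁) (pPsh C)
      (yonedaEquiv.symm (⟨Y, Z, f, g⟩ : (UPsh C).obj (op X))) := by
  refine IsPullback.of_forall_isPullback_app fun U =>
    (Types.isPullback_iff _ _ _ _).mpr ⟨?_, ?_, ?_⟩
  · ext k
    exact (pPsh_app_eq_mk_iff _ _ _).mpr ⟨k ≫ pr₂, rfl, show _ = (k ≫ pr₁) ≫ f by simp [h.w]⟩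
  · rintro k₁ k₂ ⟨h₂, h₁⟩
    exact h.hom_ext h₁ (uTildePsh_mk_inj.mp h₂).1
  · intro s k hs
    rw [yonedaEquiv_symm_uPsh_app, pPsh_app_eq_mk_iff] at hs
    obtain ⟨b, rfl, hb⟩ := hs
    refine ⟨h.lift k b hb.symm, ?_, h.lift_fst k b hb.symm⟩
    rw [yonedaEquiv_symm_uTildePsh_app, h.lift_snd]

/-- For a category `C` with pullbacks and a pullback square `W = X ×_Y Z` with
projections `pr₁ : W ⟶ X`, `pr₂ : W ⟶ Z` over `f : X ⟶ Y`, `g : Z ⟶ Y`, the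
square in presheaves with top `ṽ(pr₂, g) : Yo(W) ⟶ Ũ_C`, left `Yo(pr₁)`, right
`p_C : Ũ_C ⟶ U_C` and bottom `v(f, g) : Yo(X) ⟶ U_C` is a pullback square
(so the pullback of `p_C` along any morphism from a representable is representable). -/
theorem uPsh_pullback_representable {C : Type u} [SmallCategory C] [HasPullbacks C]
    {X Y Z W : C} (f : X ⟶ Y) (g : Z ⟶ Y) (pr₁ : W ⟶ X) (pr₂ : W ⟶ Z)
    (h : IsPullback pr₁ pr₂ f g) :
    IsPullback (yonedaEquiv.symm (⟨Z, Y, pr₂, g⟩ : (UtildePsh C).obj (op W)))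
      (yoneda.map pr₁) (pPsh C)
      (yonedaEquiv.symm (⟨Y, Z, f, g⟩ : (UPsh C).obj (op X))) :=
  uPsh_pullback_representable_general f g pr₁ pr₂ h
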